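/- arXiv:2605.19894 — 2 statements merged into one kernel-verified Lean document; each statement's English description precedes it below -/
import Mathlib

section
/- Assume B is irreducible and SNR(λ,B) > 1. Then the function χ ↦ R(χ,1) attains a global minimum over [-1,∞)^L at some point χ* lying in the open cube (-1,0)^L; that is, there exists χ* with -1 < χ*_l < 0 for every l and R(χ*,1) ≤ R(χ,1) for all χ ∈ [-1,∞)^L. -/
/-!
`R(·, 1)` is continuous on `[-1, ∞)^L` and grows quadratically, so it has a minimiser `χ`.
Moving one coordinate changes `log det C(χ)` by `log (1 + λ_l t (C⁻¹)_ll)` (matrix determinant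
lemma), so the first-order conditions read `χ_l = -(C⁻¹)_ll < 0` at interior coordinates and
`(C⁻¹)_ll ≥ 1 = B_ll` where `χ_l = -1`. Since `B - C⁻¹ = C⁻¹ (D + D B D) C⁻¹ ⪰ 0` with
`D = Diag(λ ⊙ (χ + 𝟙))`, the latter forces `B_lj = 0` whenever `χ_j > -1`; by irreducibility a
minimiser touching the boundary is `-𝟙`. But `-𝟙` is not a minimiser when `SNR > 1`: taking
`w = |u|` for an eigenvector `u` of `Diag(√λ)(B⊙B)Diag(√λ)` with eigenvalue `> 1`, the bound
`log det (1 + N) ≤ tr N - tr N² / 2 + (tr N)³ / 3` (`N ⪰ 0`) shows that `R` strictly decreases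
along `-𝟙 + t w / √λ` for small `t > 0`.
-/

open Matrix

/-- A square matrix is irreducible if there is no nonempty proper subset `S` of the index set
with `A i j = 0` for all `i ∈ S` and `j ∉ S`. -/
def MatrixIrreducible {L : ℕ} (A : Matrix (Fin L) (Fin L) ℝ) : Prop :=
  ¬ ∃ S : Finset (Fin L), S.Nonempty ∧ S ≠ Finset.univ ∧
      ∀ i ∈ S, ∀ j ∉ S, A i j = 0

/-- The matrix `C(χ) = σ B⁻¹ + Diag(λ ⊙ (χ + 𝟙))`. -/
noncomputable def Cmat {L : ℕ} (σ : ℝ) (lam : Fin L → ℝ) (B : Matrix (Fin L) (Fin L) ℝ)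
    (χ : Fin L → ℝ) : Matrix (Fin L) (Fin L) ℝ :=
  σ • B⁻¹ + Matrix.diagonal (fun l => lam l * (χ l + 1))

/-- The replica-symmetric objective
`R(χ,σ) = log det(σ B⁻¹ + Diag(λ ⊙ (χ+𝟙))) + (1/2) ∑ λ_l χ_l²`. -/
noncomputable def Rfun {L : ℕ} (σ : ℝ) (lam : Fin L → ℝ) (B : Matrix (Fin L) (Fin L) ℝ)
    (χ : Fin L → ℝ) : ℝ :=
  Real.log (Cmat σ lam B χ).det + (1 / 2) * ∑ l, lam l * χ l ^ 2

lemma Real.log_one_add_le_cubic {x : ℝ} (hx : 0 ≤ x) :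
    Real.log (1 + x) ≤ x - x ^ 2 / 2 + x ^ 3 / 3 := by
  let F (y : ℝ) : ℝ := y - y ^ 2 / 2 + y ^ 3 / 3 - Real.log (1 + y)
  have hF : ∀ y ∈ Set.Ici (0 : ℝ), HasDerivAt F (1 - y + y ^ 2 - 1 / (1 + y)) y := by
    intro y hy
    have hy1 : 1 + y ≠ 0 := by rw [Set.mem_Ici] at hy; positivity
    have hlog := ((hasDerivAt_id y).const_add 1).log hy1
    refine ((((hasDerivAt_id y).sub ((hasDerivAt_pow 2 y).div_const 2)).add
      ((hasDerivAt_pow 3 y).div_const 3)).sub hlog).congr_deriv ?_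
    norm_num
  suffices MonotoneOn F (Set.Ici 0) by
    simpa [F] using this Set.self_mem_Ici hx hx
  refine monotoneOn_of_hasDerivWithinAt_nonneg (convex_Ici 0)
    (fun y hy ↦ (hF y hy).continuousAt.continuousWithinAt)
    (fun y hy ↦ (hF y (interior_subset hy)).hasDerivWithinAt) fun y hy ↦ ?_
  rw [interior_Ici, Set.mem_Ioi] at hy
  have : 1 - y + y ^ 2 - 1 / (1 + y) = y ^ 3 / (1 + y) := by field_simp; ring
  rw [this]
  positivity

lemma Finset.sum_pow_three_le_pow_three_sum_of_nonneg {ι R : Type*} [CommSemiring R]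
    [PartialOrder R] [IsOrderedRing R] {s : Finset ι} {f : ι → R} (hf : ∀ i ∈ s, 0 ≤ f i) :
    ∑ i ∈ s, f i ^ 3 ≤ (∑ i ∈ s, f i) ^ 3 := by
  calc ∑ i ∈ s, f i ^ 3 = ∑ i ∈ s, f i * f i ^ 2 := by simp_rw [pow_succ' _ 2]
    _ ≤ ∑ i ∈ s, f i * (∑ j ∈ s, f j) ^ 2 := by
      gcongr with i hi
      · exact hf i hi
      · exact hf i hi
      · exact Finset.single_le_sum hf hi
    _ = (∑ i ∈ s, f i) ^ 3 := by rw [← Finset.sum_mul]; ring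

namespace Matrix

variable {n : Type*} [Fintype n] [DecidableEq n] {A : Matrix n n ℝ}

lemma IsHermitian.det_one_add (hA : A.IsHermitian) :
    (1 + A).det = ∏ i, (1 + hA.eigenvalues i) := by
  conv_lhs => rw [hA.spectral_theorem,
    ← map_one (Unitary.conjStarAlgAut ℝ _ hA.eigenvectorUnitary), ← map_add,
    Unitary.conjStarAlgAut_apply, det_mul_right_comm,
    Unitary.mul_star_self_of_mem hA.eigenvectorUnitary.2, one_mul]
  rw [← diagonal_one, diagonal_add, det_diagonal]
  rfl

lemma IsHermitian.trace_mul_self (hA : A.IsHermitian) :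
    (A * A).trace = ∑ i, hA.eigenvalues i ^ 2 := by
  conv_lhs => rw [hA.spectral_theorem, ← map_mul, Unitary.conjStarAlgAut_apply, trace_mul_cycle,
    Unitary.coe_star_mul_self, one_mul, diagonal_mul_diagonal, trace_diagonal]
  simp [sq]

lemma PosSemidef.one_le_det_one_add (hA : A.PosSemidef) : 1 ≤ (1 + A).det := by
  rw [hA.isHermitian.det_one_add]
  exact Finset.one_le_prod fun i _ ↦ le_add_of_nonneg_right (hA.eigenvalues_nonneg i)

lemma PosSemidef.log_det_one_add_le (hA : A.PosSemidef) :
    Real.log (1 + A).det ≤ A.trace - (A * A).trace / 2 + A.trace ^ 3 / 3 := by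
  have hμ := hA.eigenvalues_nonneg
  rw [hA.isHermitian.det_one_add, hA.isHermitian.trace_mul_self,
    hA.isHermitian.trace_eq_sum_eigenvalues, Real.log_prod fun i _ ↦ by linarith [hμ i]]
  have hcube := Finset.sum_pow_three_le_pow_three_sum_of_nonneg (s := Finset.univ) fun i _ ↦ hμ i
  have hlog :=
    Finset.sum_le_sum fun i (_ : i ∈ Finset.univ) ↦ Real.log_one_add_le_cubic (hμ i)
  simp only [Finset.sum_add_distrib, Finset.sum_sub_distrib, ← Finset.sum_div] at hlog
  simp only [RCLike.ofReal_real_eq_id, id]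
  linarith

open scoped MatrixOrder in
lemma PosDef.exists_det_inv_add_eq {B D : Matrix n n ℝ} (hB : B.PosDef) (hD : D.PosSemidef) :
    ∃ N : Matrix n n ℝ, N.PosSemidef ∧ (B⁻¹ + D).det = B⁻¹.det * (1 + N).det ∧
      N.trace = (B * D).trace ∧ (N * N).trace = (B * D * (B * D)).trace := by
  set s := CFC.sqrt D
  have hss : s * s = D := CFC.sqrt_mul_sqrt_self D hD.nonneg
  have hs : sᴴ = s := (CFC.sqrt_nonneg D).posSemidef.isHermitian
  refine ⟨s * B * s, by simpa only [hs] using hB.posSemidef.conjTranspose_mul_mul_same s,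
    ?_, ?_, ?_⟩
  · rw [det_one_add_mul_comm, ← mul_assoc, hss, mul_comm, ← det_mul, add_mul, one_mul,
      mul_nonsing_inv_cancel_right _ _ ((isUnit_iff_isUnit_det B).mp hB.isUnit)]
  · rw [trace_mul_cycle, hss, trace_mul_comm]
  · calc (s * B * s * (s * B * s)).trace = (s * (B * (s * s) * B * s)).trace := by
          simp only [mul_assoc]
      _ = (B * D * B * s * s).trace := by rw [trace_mul_comm, hss]
      _ = (B * D * (B * D)).trace := by simp only [mul_assoc, hss]

lemma PosDef.det_inv_le_det_inv_add {B D : Matrix n n ℝ} (hB : B.PosDef) (hD : D.PosSemidef) :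
    B⁻¹.det ≤ (B⁻¹ + D).det := by
  obtain ⟨N, hN, hdet, -, -⟩ := hB.exists_det_inv_add_eq hD
  rw [hdet]
  exact le_mul_of_one_le_right hB.inv.det_pos.le hN.one_le_det_one_add

lemma PosDef.log_det_inv_add_le {B D : Matrix n n ℝ} (hB : B.PosDef) (hD : D.PosSemidef) :
    Real.log (B⁻¹ + D).det ≤ Real.log B⁻¹.det + (B * D).trace - (B * D * (B * D)).trace / 2
      + (B * D).trace ^ 3 / 3 := by
  obtain ⟨N, hN, hdet, htr, htr2⟩ := hB.exists_det_inv_add_eq hD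
  rw [hdet, Real.log_mul hB.inv.det_pos.ne' (by linarith [hN.one_le_det_one_add]), ← htr,
    ← htr2]
  linarith [hN.log_det_one_add_le]

lemma det_add_diagonal_single (hA : IsUnit A.det) (l : n) (a : ℝ) :
    (A + diagonal (Pi.single l a)).det = A.det * (1 + a * A⁻¹ l l) := by
  have : diagonal (Pi.single l a) =
      replicateCol Unit (Pi.single l a) * replicateRow Unit (Pi.single l (1 : ℝ)) := by
    ext i j
    by_cases h : i = j <;> by_cases h' : i = l <;> simp_all [Pi.single_apply, mul_apply]
  rw [this, det_add_replicateCol_mul_replicateRow hA, det_unique (_ : Matrix Unit Unit ℝ)]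
  simp [mul_apply, Pi.single_apply, mul_comm]

lemma PosDef.apply_eq_zero_of_le_inv_add_diagonal {B : Matrix n n ℝ} (hB : B.PosDef)
    {d : n → ℝ} (hd : 0 ≤ d) {l j : n} (hl : B l l ≤ (B⁻¹ + diagonal d)⁻¹ l l) (hj : 0 < d j) :
    B l j = 0 := by
  set C := B⁻¹ + diagonal d
  have hC : C.PosDef := hB.inv.add_posSemidef (.diagonal hd)
  have hBt : Bᵀ = B := by simpa using hB.isHermitian.eq
  set e : n → ℝ := Pi.single l 1
  set v := C⁻¹ *ᵥ e
  set u := diagonal d *ᵥ v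
  have hBe : B *ᵥ e = v + B *ᵥ u := by
    have hCv : C *ᵥ v = e := by
      rw [mulVec_mulVec, mul_nonsing_inv _ ((isUnit_iff_isUnit_det C).mp hC.isUnit), one_mulVec]
    rw [← hCv, add_mulVec, mulVec_add, mulVec_mulVec,
      mul_nonsing_inv _ ((isUnit_iff_isUnit_det B).mp hB.isUnit), one_mulVec]
  have hBe_apply (i : n) : (B *ᵥ e) i = B i l := by simp [e]
  -- `(B u)_l = ⟪B e, u⟫ = ⟪v, D v⟫ + ⟪u, B u⟫`, and `(B u)_l = B l l - C⁻¹ l l ≤ 0`.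
  have hBu : (B *ᵥ u) l = v ⬝ᵥ u + u ⬝ᵥ B *ᵥ u := by
    calc (B *ᵥ u) l = e ⬝ᵥ B *ᵥ u := by simp [e, single_dotProduct]
      _ = (B *ᵥ e) ⬝ᵥ u := by rw [dotProduct_mulVec, ← mulVec_transpose, hBt]
      _ = _ := by rw [hBe, add_dotProduct, dotProduct_comm (B *ᵥ u)]
  have hvu : 0 ≤ v ⬝ᵥ u := Finset.sum_nonneg fun i _ ↦ by
    simp only [u, mulVec_diagonal]; nlinarith [show 0 ≤ d i from hd i, sq_nonneg (v i)]
  have huBu : u ⬝ᵥ B *ᵥ u ≤ 0 := by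
    have := hBe_apply l
    rw [hBe, Pi.add_apply] at this
    have : v l = C⁻¹ l l := by simp [v, e]
    linarith
  have hu : u = 0 := by
    by_contra hu
    exact (hB.dotProduct_mulVec_pos hu).not_ge (by simpa using huBu)
  have hvj : v j = 0 := by
    have : d j * v j = 0 := by simpa [u, mulVec_diagonal] using congrFun hu j
    exact (mul_eq_zero.mp this).resolve_left hj.ne'
  rw [← hBt, transpose_apply, ← hBe_apply, hBe, hu, mulVec_zero, add_zero, hvj]

lemma IsHermitian.exists_nonneg_dotProduct_lt {A : Matrix n n ℝ} (hA : A.IsHermitian)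
    (hA0 : ∀ i j, 0 ≤ A i j) (h : 1 < ⨆ i, hA.eigenvalues i) :
    ∃ w : n → ℝ, 0 ≤ w ∧ w ⬝ᵥ w < w ⬝ᵥ A *ᵥ w := by
  have : Nonempty n := by
    by_contra hn
    rw [not_nonempty_iff] at hn
    norm_num at h
  obtain ⟨i, hi⟩ := exists_lt_of_lt_ciSup h
  set u := (hA.eigenvectorBasis i).ofLp
  have hu : u ⬝ᵥ u = 1 := by
    have := EuclideanSpace.inner_eq_star_dotProduct (hA.eigenvectorBasis i)
      (hA.eigenvectorBasis i)
    rw [real_inner_self_eq_norm_sq, hA.eigenvectorBasis.orthonormal.1 i] at this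
    simpa using this.symm
  have huAu : u ⬝ᵥ A *ᵥ u = hA.eigenvalues i := by
    rw [hA.mulVec_eigenvectorBasis i, dotProduct_smul, hu, smul_eq_mul, mul_one]
  -- replacing `u` by `|u|` keeps `⟪u, u⟫` and, as `A ≥ 0` entrywise, can only increase `⟪u, A u⟫`
  refine ⟨fun j ↦ |u j|, fun j ↦ abs_nonneg _, ?_⟩
  have hw : (fun j ↦ |u j|) ⬝ᵥ (fun j ↦ |u j|) = u ⬝ᵥ u := by
    simp only [dotProduct, abs_mul_abs_self]
  have hwAw : u ⬝ᵥ A *ᵥ u ≤ (fun j ↦ |u j|) ⬝ᵥ A *ᵥ (fun j ↦ |u j|) := by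
    simp only [dotProduct, mulVec, Finset.mul_sum]
    refine Finset.sum_le_sum fun j _ ↦ Finset.sum_le_sum fun k _ ↦ ?_
    calc u j * (A j k * u k) ≤ |u j * (A j k * u k)| := le_abs_self _
      _ = |u j| * (A j k * |u k|) := by rw [abs_mul, abs_mul, abs_of_nonneg (hA0 j k)]
  linarith

end Matrix

section Objective

open Filter Topology

variable {L : ℕ} {lam : Fin L → ℝ} {B : Matrix (Fin L) (Fin L) ℝ}

lemma Cmat_one (χ : Fin L → ℝ) :
    Cmat 1 lam B χ = B⁻¹ + diagonal (fun l ↦ lam l * (χ l + 1)) := by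
  rw [Cmat, one_smul]

lemma lam_mul_add_one_nonneg (hlam : ∀ l, 0 ≤ lam l) {χ : Fin L → ℝ} (hχ : -1 ≤ χ) :
    0 ≤ fun l ↦ lam l * (χ l + 1) :=
  fun l ↦ mul_nonneg (hlam l) (by linarith [show -1 ≤ χ l from hχ l])

lemma posDef_Cmat (hB : B.PosDef) (hlam : ∀ l, 0 ≤ lam l) {χ : Fin L → ℝ} (hχ : -1 ≤ χ) :
    (Cmat 1 lam B χ).PosDef := by
  rw [Cmat_one]
  exact hB.inv.add_posSemidef (.diagonal (lam_mul_add_one_nonneg hlam hχ))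

lemma continuousOn_Rfun (hB : B.PosDef) (hlam : ∀ l, 0 ≤ lam l) :
    ContinuousOn (Rfun 1 lam B) (Set.Ici (-1)) := by
  have hdet : Continuous fun χ : Fin L → ℝ ↦ (Cmat 1 lam B χ).det := by
    simp only [Cmat_one]
    exact (continuous_const.add (Continuous.matrix_diagonal (by fun_prop))).matrix_det
  exact (hdet.continuousOn.log fun χ hχ ↦ (posDef_Cmat hB hlam hχ).det_pos.ne').add
    (by fun_prop)

lemma log_det_inv_add_le_Rfun (hB : B.PosDef) (hlam : ∀ l, 0 ≤ lam l) {χ : Fin L → ℝ}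
    (hχ : -1 ≤ χ) (l : Fin L) : Real.log B⁻¹.det + lam l * χ l ^ 2 / 2 ≤ Rfun 1 lam B χ := by
  have hdet := hB.det_inv_le_det_inv_add (.diagonal (lam_mul_add_one_nonneg hlam hχ))
  have hsum : lam l * χ l ^ 2 ≤ ∑ j, lam j * χ j ^ 2 :=
    Finset.single_le_sum (f := fun j ↦ lam j * χ j ^ 2)
      (fun j _ ↦ mul_nonneg (hlam j) (sq_nonneg _)) (Finset.mem_univ l)
  rw [Rfun, Cmat_one]
  linarith [Real.log_le_log hB.inv.det_pos hdet]

lemma exists_isMinOn_Rfun (hB : B.PosDef) (hlam : ∀ l, 0 < lam l) :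
    ∃ χ ∈ Set.Ici (-1), IsMinOn (Rfun 1 lam B) (Set.Ici (-1)) χ := by
  refine (continuousOn_Rfun hB fun l ↦ (hlam l).le).exists_isMinOn' isClosed_Ici
    (x₀ := 0) (by simp) ?_
  set c := Rfun 1 lam B 0 - Real.log B⁻¹.det
  -- outside the box `[-1, T]`, the quadratic term alone exceeds `c`
  set T : Fin L → ℝ := fun l ↦ 1 + |c| / lam l
  rw [Filter.eventually_inf_principal]
  filter_upwards [isCompact_Icc (a := -1) (b := T) |>.compl_mem_cocompact] with χ hχT hχ
  obtain ⟨l, hl⟩ : ∃ l, T l < χ l := by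
    by_contra! h
    exact hχT ⟨hχ, h⟩
  have hTl : c ≤ lam l * T l ^ 2 / 2 := by
    have : lam l * (|c| / lam l) = |c| := mul_div_cancel₀ _ (hlam l).ne'
    nlinarith [le_abs_self c, (hlam l).le, abs_nonneg c, div_nonneg (abs_nonneg c) (hlam l).le]
  have hχl : lam l * T l ^ 2 ≤ lam l * χ l ^ 2 := by
    have : 0 ≤ T l := by have := div_nonneg (abs_nonneg c) (hlam l).le; linarith
    gcongr
    exact (hlam l).le
  linarith [log_det_inv_add_le_Rfun hB (fun l ↦ (hlam l).le) hχ l]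

lemma Rfun_add_single {χ : Fin L → ℝ} (hC : (Cmat 1 lam B χ).det ≠ 0) (l : Fin L) {t : ℝ}
    (ht : 0 < 1 + lam l * t * (Cmat 1 lam B χ)⁻¹ l l) :
    Rfun 1 lam B (χ + Pi.single l t) = Rfun 1 lam B χ
      + Real.log (1 + lam l * t * (Cmat 1 lam B χ)⁻¹ l l) + lam l * (χ l * t + t ^ 2 / 2) := by
  have hCmat : Cmat 1 lam B (χ + Pi.single l t)
      = Cmat 1 lam B χ + diagonal (Pi.single l (lam l * t)) := by
    rw [Cmat_one, Cmat_one, add_assoc, diagonal_add]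
    congr 2
    ext j
    by_cases h : j = l
    · subst h; simp; ring
    · simp [h]
  have hsum : ∑ j, lam j * (χ + Pi.single l t : Fin L → ℝ) j ^ 2
      = ∑ j, lam j * χ j ^ 2 + lam l * (2 * χ l * t + t ^ 2) := by
    rw [← sub_eq_iff_eq_add', ← Finset.sum_sub_distrib, Fintype.sum_eq_single l]
    · simp; ring
    · intro j hj; simp [hj]
  rw [Rfun, Rfun, hCmat, det_add_diagonal_single hC.isUnit, Real.log_mul hC ht.ne', hsum]
  ring

lemma inv_apply_add_nonneg_of_isMinOn (hB : B.PosDef) (hlam : ∀ l, 0 < lam l)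
    {χ : Fin L → ℝ} (hχ : -1 ≤ χ) (hmin : IsMinOn (Rfun 1 lam B) (Set.Ici (-1)) χ)
    (l : Fin L) : 0 ≤ (Cmat 1 lam B χ)⁻¹ l l + χ l := by
  have hC := posDef_Cmat hB (fun l ↦ (hlam l).le) hχ
  set α := (Cmat 1 lam B χ)⁻¹ l l
  have hα : 0 < α := hC.inv.diag_pos
  by_contra! h
  -- increase `χ l` by `t = -(α + χ l)`, which lowers `R` by at least `λ_l t² / 2`
  set t := -(α + χ l)
  have ht : 0 < t := by linarith
  have hpos : 0 < 1 + lam l * t * α := by have := hlam l; positivity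
  have hle : Rfun 1 lam B χ ≤ Rfun 1 lam B (χ + Pi.single l t) :=
    hmin (le_add_of_le_of_nonneg hχ (Pi.single_nonneg.mpr ht.le))
  rw [Rfun_add_single hC.det_pos.ne' l hpos] at hle
  have hlog := Real.log_le_sub_one_of_pos hpos
  nlinarith [mul_pos (hlam l) (mul_pos ht ht)]

lemma inv_apply_add_eq_zero_of_isMinOn (hB : B.PosDef) (hlam : ∀ l, 0 < lam l)
    {χ : Fin L → ℝ} (hχ : -1 ≤ χ) (hmin : IsMinOn (Rfun 1 lam B) (Set.Ici (-1)) χ)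
    {l : Fin L} (hl : -1 < χ l) : (Cmat 1 lam B χ)⁻¹ l l + χ l = 0 := by
  have hC := posDef_Cmat hB (fun l ↦ (hlam l).le) hχ
  set α := (Cmat 1 lam B χ)⁻¹ l l
  have hnear : ∀ᶠ t in 𝓝 (0 : ℝ), -1 < χ l + t ∧ 0 < 1 + lam l * t * α :=
    ((by fun_prop : Continuous fun t ↦ χ l + t).tendsto' 0 _ (add_zero _)
      |>.eventually_const_lt hl).and
    ((by fun_prop : Continuous fun t ↦ 1 + lam l * t * α).tendsto' 0 1 (by simp)
      |>.eventually_const_lt one_pos)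
  have hmin' : IsLocalMin (fun t ↦ Rfun 1 lam B (χ + Pi.single l t)) 0 := by
    filter_upwards [hnear] with t ht
    have hmem : χ + Pi.single l t ∈ Set.Ici (-1) := fun j ↦ by
      by_cases h : j = l
      · subst h; simp; linarith [ht.1]
      · simpa [h] using hχ j
    simpa using hmin hmem
  have hderiv :
      HasDerivAt (fun t ↦ Rfun 1 lam B (χ + Pi.single l t)) (lam l * (α + χ l)) 0 := by
    have hlog : HasDerivAt (fun t ↦ Real.log (1 + lam l * t * α)) (lam l * α) 0 := by
      simpa using (((hasDerivAt_id (0 : ℝ)).const_mul (lam l)).mul_const α).const_add 1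
        |>.log (by simp)
    have := ((hlog.const_add (Rfun 1 lam B χ)).add
      (((hasDerivAt_id (0 : ℝ)).const_mul (χ l)).add ((hasDerivAt_pow 2 (0 : ℝ)).div_const 2)
        |>.const_mul (lam l)))
    refine (this.congr_deriv (by simp; ring)).congr_of_eventuallyEq ?_
    filter_upwards [hnear] with t ht
    simp [Rfun_add_single hC.det_pos.ne' l ht.2, α]
  have := hmin'.hasDerivAt_eq_zero hderiv
  exact (mul_eq_zero.mp this).resolve_left (hlam l).ne'

lemma Rfun_neg_one : Rfun 1 lam B (-1) = Real.log B⁻¹.det + (∑ l, lam l) / 2 := by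
  simp [Rfun, Cmat_one]
  ring

lemma Rfun_neg_one_add_div_le (hB : B.PosDef) (hBdiag : ∀ l, B l l = 1) (hlam : ∀ l, 0 < lam l)
    {d : Fin L → ℝ} (hd : 0 ≤ d) :
    Rfun 1 lam B (fun l ↦ -1 + d l / lam l) ≤ Rfun 1 lam B (-1)
      - (d ᵥ* (B ⊙ B) ⬝ᵥ d - ∑ l, d l ^ 2 / lam l) / 2 + (∑ l, d l) ^ 3 / 3 := by
  have hBt : Bᵀ = B := by simpa using hB.isHermitian.eq
  have hC : Cmat 1 lam B (fun l ↦ -1 + d l / lam l) = B⁻¹ + diagonal d := by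
    rw [Cmat_one]
    congr 2
    ext l
    field_simp [(hlam l).ne']
    ring
  have htr : (B * diagonal d).trace = ∑ l, d l := by
    simp [trace, mul_diagonal, hBdiag]
  have htr2 : (B * diagonal d * (B * diagonal d)).trace = d ᵥ* (B ⊙ B) ⬝ᵥ d := by
    rw [dotProduct_vecMul_hadamard, transpose_mul, diagonal_transpose, hBt, ← mul_assoc,
      trace_mul_comm]
    simp only [mul_assoc]
  have hquad : ∑ l, lam l * (-1 + d l / lam l) ^ 2
      = ∑ l, lam l - 2 * ∑ l, d l + ∑ l, d l ^ 2 / lam l := by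
    rw [Finset.mul_sum, ← Finset.sum_sub_distrib, ← Finset.sum_add_distrib]
    refine Finset.sum_congr rfl fun l _ ↦ ?_
    field_simp [(hlam l).ne']
    ring
  have hlog := hB.log_det_inv_add_le (PosSemidef.diagonal hd)
  rw [htr, htr2] at hlog
  rw [Rfun, hC, hquad, Rfun_neg_one]
  linarith

lemma exists_Rfun_lt_Rfun_neg_one_of_sum_sq_div_lt (hB : B.PosDef) (hBdiag : ∀ l, B l l = 1)
    (hlam : ∀ l, 0 < lam l) {d : Fin L → ℝ} (hd : 0 ≤ d)
    (hdq : ∑ l, d l ^ 2 / lam l < d ᵥ* (B ⊙ B) ⬝ᵥ d) :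
    ∃ χ, -1 ≤ χ ∧ Rfun 1 lam B χ < Rfun 1 lam B (-1) := by
  set P := d ᵥ* (B ⊙ B) ⬝ᵥ d
  set q := ∑ l, d l ^ 2 / lam l
  set a := ∑ l, d l
  have ha : 0 ≤ a := Finset.sum_nonneg fun l _ ↦ hd l
  -- along `t • d` the second-order gain `t² (P - q) / 2` beats the cubic error `(t a)³ / 3`
  set t := (P - q) / (a ^ 3 + 1)
  have ht : 0 < t := by apply div_pos <;> nlinarith [pow_nonneg ha 3]
  have hta : t * a ^ 3 < P - q := by
    rw [div_mul_eq_mul_div, div_lt_iff₀ (by positivity)]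
    nlinarith [pow_nonneg ha 3]
  have hle := Rfun_neg_one_add_div_le hB hBdiag hlam (smul_nonneg ht.le hd)
  have hP : (t • d) ᵥ* (B ⊙ B) ⬝ᵥ (t • d) = t ^ 2 * P := by
    rw [smul_vecMul, smul_dotProduct, dotProduct_smul, smul_eq_mul, smul_eq_mul]
    ring
  have hq : ∑ l, (t • d) l ^ 2 / lam l = t ^ 2 * q := by
    rw [Finset.mul_sum]
    simp only [Pi.smul_apply, smul_eq_mul, mul_pow, mul_div_assoc]
  have ha' : ∑ l, (t • d) l = t * a := by
    rw [Finset.mul_sum]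
    simp only [Pi.smul_apply, smul_eq_mul]
  rw [hP, hq, ha'] at hle
  refine ⟨_, fun l ↦ ?_, hle.trans_lt ?_⟩
  · have : 0 ≤ t * d l / lam l := div_nonneg (mul_nonneg ht.le (hd l)) (hlam l).le
    simp only [Pi.neg_apply, Pi.one_apply, Pi.smul_apply, smul_eq_mul]
    linarith
  · nlinarith [mul_pos ht ht]

lemma exists_Rfun_lt_Rfun_neg_one (hB : B.PosDef) (hBdiag : ∀ l, B l l = 1)
    (hlam : ∀ l, 0 < lam l)
    (hS : (diagonal (fun l ↦ Real.sqrt (lam l)) * B ⊙ B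
      * diagonal (fun l ↦ Real.sqrt (lam l))).IsHermitian)
    (hSNR : 1 < ⨆ i, hS.eigenvalues i) :
    ∃ χ, -1 ≤ χ ∧ Rfun 1 lam B χ < Rfun 1 lam B (-1) := by
  have hS0 : ∀ i j, 0 ≤ (diagonal (fun l ↦ Real.sqrt (lam l)) * B ⊙ B
      * diagonal (fun l ↦ Real.sqrt (lam l))) i j := fun i j ↦ by
    simp only [mul_diagonal, diagonal_mul, hadamard_apply]
    exact mul_nonneg (mul_nonneg (Real.sqrt_nonneg _) (mul_self_nonneg _)) (Real.sqrt_nonneg _)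
  obtain ⟨w, hw0, hw⟩ := hS.exists_nonneg_dotProduct_lt hS0 hSNR
  refine exists_Rfun_lt_Rfun_neg_one_of_sum_sq_div_lt hB hBdiag hlam
    (d := fun l ↦ Real.sqrt (lam l) * w l) (fun l ↦ mul_nonneg (Real.sqrt_nonneg _) (hw0 l)) ?_
  convert hw using 1
  · refine Finset.sum_congr rfl fun l _ ↦ ?_
    rw [mul_pow, Real.sq_sqrt (hlam l).le]
    field_simp [(hlam l).ne']
  · simp only [dotProduct, vecMul, mulVec, mul_diagonal, diagonal_mul, hadamard_apply,
      Finset.sum_mul, Finset.mul_sum]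
    rw [Finset.sum_comm]
    refine Finset.sum_congr rfl fun i _ ↦ Finset.sum_congr rfl fun j _ ↦ ?_
    ring

lemma eq_neg_one_of_isMinOn (hB : B.PosDef) (hBdiag : ∀ l, B l l = 1) (hlam : ∀ l, 0 < lam l)
    (hIrr : MatrixIrreducible B) {χ : Fin L → ℝ} (hχ : -1 ≤ χ)
    (hmin : IsMinOn (Rfun 1 lam B) (Set.Ici (-1)) χ) {l : Fin L} (hl : χ l = -1) : χ = -1 := by
  by_contra hne
  refine hIrr ⟨Finset.univ.filter (χ · = -1), ⟨l, by simpa using hl⟩,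
    fun huniv ↦ hne (funext fun i ↦ ?_), fun i hi j hj ↦ ?_⟩
  · simpa using Finset.eq_univ_iff_forall.mp huniv i
  · rw [Finset.mem_filter_univ] at hi hj
    have hα := inv_apply_add_nonneg_of_isMinOn hB hlam hχ hmin i
    rw [Cmat_one, hi] at hα
    exact hB.apply_eq_zero_of_le_inv_add_diagonal (lam_mul_add_one_nonneg
      (fun l ↦ (hlam l).le) hχ) (by linarith [hBdiag i])
      (mul_pos (hlam j) (by linarith [show -1 < χ j from lt_of_le_of_ne (hχ j) (Ne.symm hj)]))

end Objective

theorem stmt4_general {L : ℕ} (lam : Fin L → ℝ) (hlam : ∀ l, 0 < lam l)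
    (B : Matrix (Fin L) (Fin L) ℝ) (hB : B.PosDef) (hBdiag : ∀ l, B l l = 1)
    (hIrr : MatrixIrreducible B)
    (hS : (Matrix.diagonal (fun l => Real.sqrt (lam l)) * Matrix.hadamard B B *
        Matrix.diagonal (fun l => Real.sqrt (lam l))).IsHermitian)
    (hSNR : 1 < ⨆ i, hS.eigenvalues i) :
    ∃ χs : Fin L → ℝ, (∀ l, -1 < χs l ∧ χs l < 0) ∧
      ∀ χ : Fin L → ℝ, (∀ l, -1 ≤ χ l) → Rfun 1 lam B χs ≤ Rfun 1 lam B χ := by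
  obtain ⟨χ, hχ, hmin⟩ := exists_isMinOn_Rfun hB hlam
  have hint : ∀ l, -1 < χ l := by
    intro l
    refine (hχ l).lt_of_ne fun hl ↦ ?_
    obtain ⟨χ', hχ', hlt⟩ := exists_Rfun_lt_Rfun_neg_one hB hBdiag hlam hS hSNR
    have hle := hmin hχ'
    rw [eq_neg_one_of_isMinOn hB hBdiag hlam hIrr hχ hmin hl.symm] at hle
    exact hlt.not_ge hle
  refine ⟨χ, fun l ↦ ⟨hint l, ?_⟩, fun χ' hχ' ↦ hmin hχ'⟩
  have hstat := inv_apply_add_eq_zero_of_isMinOn hB hlam hχ hmin (hint l)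
  have hα := (posDef_Cmat hB (fun l ↦ (hlam l).le) hχ).inv.diag_pos (i := l)
  linarith

/-- if `B` is irreducible and `SNR(λ,B) > 1` (largest eigenvalue of
`Diag(√λ)(B⊙B)Diag(√λ)` greater than one), then `χ ↦ R(χ,1)` attains a global minimum
over `[-1,∞)^L` at some point of the open cube `(-1,0)^L`. -/
theorem stmt4 {L : ℕ} (hL : 0 < L) (lam : Fin L → ℝ) (hlam : ∀ l, 0 < lam l)
    (B : Matrix (Fin L) (Fin L) ℝ) (hB : B.PosDef) (hBdiag : ∀ l, B l l = 1)
    (hIrr : MatrixIrreducible B)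
    (hS : (Matrix.diagonal (fun l => Real.sqrt (lam l)) * Matrix.hadamard B B *
        Matrix.diagonal (fun l => Real.sqrt (lam l))).IsHermitian)
    (hSNR : 1 < ⨆ i, hS.eigenvalues i) :
    ∃ χs : Fin L → ℝ, (∀ l, -1 < χs l ∧ χs l < 0) ∧
      ∀ χ : Fin L → ℝ, (∀ l, -1 ≤ χ l) → Rfun 1 lam B χs ≤ Rfun 1 lam B χ :=
  stmt4_general lam hlam B hB hBdiag hIrr hS hSNR
end

section
/- Let Ψ₁ be a real symmetric positive definite L×L matrix that is irreducible, and set Ψ₂ := (Ψ₁^{-1} + I_L)^{-1}. Then the kernel of the positive semidefinite matrix F := Diag(diag(Ψ₁Ψ₂)) − Ψ₁⊙Ψ₂ is exactly the one-dimensional span of the all-ones vector 𝟙_L. -/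
/-!
Write `M = (1 + Ψ₁)⁻¹`, so that `Ψ₂ = 1 - M`, and `D = Diag v`. For symmetric `A`, `B` the quadratic
form of `Diag(diag(AB)) - A ⊙ B` is `½ ∑ᵢⱼ Aᵢⱼ Bᵢⱼ (vᵢ - vⱼ)²`, the Frobenius pairing of the
commutators `[D, A]` and `[D, B]`. Since `[D, 1 - M] = M [D, Ψ₁] M`, this gives
`2 vᵀ F v = tr([D, Ψ₁]ᵀ M [D, Ψ₁] M)`, the squared Frobenius norm of `y [D, Ψ₁] yᵀ` where
`M = yᵀ y`. So `F` is positive semidefinite, and `F v = 0` forces `[D, Ψ₁] = 0`, i.e.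
`Ψ₁ᵢⱼ (vᵢ - vⱼ) = 0` for all `i, j`; irreducibility of `Ψ₁` then makes `v` constant.
-/
open Matrix

namespace Matrix

variable {n R : Type*} [Fintype n] [DecidableEq n] [CommRing R]

theorem inv_add_one_inv_eq_one_sub_inv_one_add {A : Matrix n n R} (hA : IsUnit A.det)
    (h1A : IsUnit (1 + A).det) : (A⁻¹ + 1)⁻¹ = 1 - (1 + A)⁻¹ := by
  refine inv_eq_right_inv ?_
  have hfactor : A⁻¹ + 1 = A⁻¹ * (1 + A) := by rw [mul_add, mul_one, nonsing_inv_mul _ hA]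
  calc (A⁻¹ + 1) * (1 - (1 + A)⁻¹) = A⁻¹ * ((1 + A) - (1 + A) * (1 + A)⁻¹) := by
        rw [hfactor]; noncomm_ring
    _ = 1 := by rw [mul_nonsing_inv _ h1A, add_sub_cancel_left, nonsing_inv_mul _ hA]

theorem lie_one_sub_nonsing_inv (D : Matrix n n R) {N : Matrix n n R} (hN : IsUnit N.det) :
    ⁅D, 1 - N⁻¹⁆ = N⁻¹ * ⁅D, N⁆ * N⁻¹ := by
  calc ⁅D, 1 - N⁻¹⁆ = N⁻¹ * D * (N * N⁻¹) - (N⁻¹ * N) * D * N⁻¹ := by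
        rw [nonsing_inv_mul N hN, mul_nonsing_inv N hN, Ring.lie_def]; noncomm_ring
    _ = N⁻¹ * ⁅D, N⁆ * N⁻¹ := by rw [Ring.lie_def]; noncomm_ring

theorem lie_one_add (D A : Matrix n n R) : ⁅D, 1 + A⁆ = ⁅D, A⁆ := by
  rw [Ring.lie_def, Ring.lie_def]; noncomm_ring

theorem lie_diagonal_apply (v : n → R) (A : Matrix n n R) (i j : n) :
    ⁅diagonal v, A⁆ i j = (v i - v j) * A i j := by
  simp only [Ring.lie_def, sub_apply, diagonal_mul, mul_diagonal]
  ring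

theorem diagonal_diag_mul_sub_hadamard_mulVec_const {A B : Matrix n n R} (hB : B.IsSymm)
    (c : R) : (diagonal (diag (A * B)) - A ⊙ B) *ᵥ (fun _ => c) = 0 := by
  ext i
  rw [sub_mulVec, Pi.sub_apply, mulVec_diagonal, Pi.zero_apply, sub_eq_zero]
  simp only [diag_apply, mul_apply, mulVec, dotProduct, hadamard_apply, hB.apply, Finset.sum_mul]

theorem two_mul_dotProduct_diagonal_diag_mul_sub_hadamard_mulVec {A B : Matrix n n R}
    (hA : A.IsSymm) (hB : B.IsSymm) (v : n → R) :
    2 * (v ⬝ᵥ (diagonal (diag (A * B)) - A ⊙ B) *ᵥ v)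
      = (⁅diagonal v, A⁆ᵀ * ⁅diagonal v, B⁆).trace := by
  have hquad : v ⬝ᵥ (diagonal (diag (A * B)) - A ⊙ B) *ᵥ v
      = ∑ i, ∑ j, A i j * B i j * (v i * v i - v i * v j) := by
    rw [sub_mulVec, dotProduct_sub, funext (mulVec_diagonal (diag (A * B)) v)]
    simp only [mulVec, dotProduct, diag_apply, mul_apply, hadamard_apply, hB.apply,
      Finset.mul_sum, Finset.sum_mul, ← Finset.sum_sub_distrib]
    refine Finset.sum_congr rfl fun i _ => Finset.sum_congr rfl fun j _ => ?_
    ring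
  have htrace : (⁅diagonal v, A⁆ᵀ * ⁅diagonal v, B⁆).trace
      = ∑ i, ∑ j, A i j * B i j * (v i - v j) ^ 2 := by
    simp only [trace, diag_apply, mul_apply, transpose_apply, lie_diagonal_apply]
    rw [Finset.sum_comm]
    refine Finset.sum_congr rfl fun i _ => Finset.sum_congr rfl fun j _ => ?_
    ring
  have hswap : ∑ i, ∑ j, A i j * B i j * (v j * v j - v j * v i)
      = ∑ i, ∑ j, A i j * B i j * (v i * v i - v i * v j) := by
    rw [Finset.sum_comm]
    refine Finset.sum_congr rfl fun i _ => Finset.sum_congr rfl fun j _ => ?_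
    rw [hA.apply, hB.apply]
  rw [hquad, htrace, two_mul]
  nth_rw 2 [← hswap]
  rw [← Finset.sum_add_distrib]
  refine Finset.sum_congr rfl fun i _ => ?_
  rw [← Finset.sum_add_distrib]
  refine Finset.sum_congr rfl fun j _ => ?_
  ring

theorem isSymm_diagonal_diag_mul_sub_hadamard {A B : Matrix n n R} (hA : A.IsSymm)
    (hB : B.IsSymm) : (diagonal (diag (A * B)) - A ⊙ B).IsSymm := by
  refine (isSymm_diagonal _).sub ?_
  rw [IsSymm, transpose_hadamard, hA.eq, hB.eq]

end Matrix

namespace Matrix.PosDef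

open scoped MatrixOrder ComplexOrder

variable {n 𝕜 : Type*} [Fintype n] [DecidableEq n] [RCLike 𝕜] {M : Matrix n n 𝕜}

theorem exists_isUnit_trace_conjTranspose_mul_mul_mul_eq (hM : M.PosDef) (C : Matrix n n 𝕜) :
    ∃ y : Matrix n n 𝕜, IsUnit y ∧
      (Cᴴ * M * C * M).trace = ((y * C * yᴴ)ᴴ * (y * C * yᴴ)).trace := by
  obtain ⟨y, hy, rfl⟩ := CStarAlgebra.isStrictlyPositive_iff_eq_star_mul_self.mp
    hM.isStrictlyPositive
  refine ⟨y, hy, ?_⟩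
  simp only [star_eq_conjTranspose, conjTranspose_mul, conjTranspose_conjTranspose, mul_assoc]
  rw [trace_mul_comm y]
  simp only [mul_assoc]

theorem trace_conjTranspose_mul_mul_mul_nonneg (hM : M.PosDef) (C : Matrix n n 𝕜) :
    0 ≤ (Cᴴ * M * C * M).trace := by
  obtain ⟨y, -, h⟩ := hM.exists_isUnit_trace_conjTranspose_mul_mul_mul_eq C
  exact h ▸ (posSemidef_conjTranspose_mul_self _).trace_nonneg

theorem trace_conjTranspose_mul_mul_mul_eq_zero_iff (hM : M.PosDef) {C : Matrix n n 𝕜} :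
    (Cᴴ * M * C * M).trace = 0 ↔ C = 0 := by
  obtain ⟨y, hy, h⟩ := hM.exists_isUnit_trace_conjTranspose_mul_mul_mul_eq C
  have hyH : IsUnit yᴴ := hy.star
  rw [h, trace_conjTranspose_mul_self_eq_zero_iff, hyH.mul_left_eq_zero, hy.mul_right_eq_zero]

end Matrix.PosDef

theorem MatrixIrreducible.exists_eq_const {L : ℕ} {A : Matrix (Fin L) (Fin L) ℝ}
    (hA : MatrixIrreducible A) {v : Fin L → ℝ} (hv : ⁅diagonal v, A⁆ = 0) :
    ∃ c : ℝ, v = fun _ => c := by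
  classical
  rcases isEmpty_or_nonempty (Fin L) with hL | ⟨⟨i₀⟩⟩
  · exact ⟨0, funext isEmptyElim⟩
  refine ⟨v i₀, funext fun j => ?_⟩
  by_contra hj
  let S := Finset.univ.filter fun i => v i = v i₀
  refine hA ⟨S, ⟨i₀, by simp [S]⟩, fun hS => hj ?_, fun i hi k hk => ?_⟩
  · simpa [S] using (hS ▸ Finset.mem_univ j : j ∈ S)
  · have hik : (v i - v k) * A i k = 0 := by rw [← lie_diagonal_apply, hv, Matrix.zero_apply]
    simp only [S, Finset.mem_filter, Finset.mem_univ, true_and] at hi hk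
    exact (mul_eq_zero.mp hik).resolve_left (sub_ne_zero.mpr (hi ▸ Ne.symm hk))

theorem stmt11_general {L : ℕ}
    (Ψ₁ : Matrix (Fin L) (Fin L) ℝ) (hΨ₁ : Ψ₁.PosDef) (hIrr : MatrixIrreducible Ψ₁)
    (Ψ₂ : Matrix (Fin L) (Fin L) ℝ) (hΨ₂ : Ψ₂ = (Ψ₁⁻¹ + 1)⁻¹)
    (F : Matrix (Fin L) (Fin L) ℝ)
    (hF : F = Matrix.diagonal (Matrix.diag (Ψ₁ * Ψ₂)) - Matrix.hadamard Ψ₁ Ψ₂) :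
    F.PosSemidef ∧
      ∀ v : Fin L → ℝ, F *ᵥ v = 0 ↔ ∃ c : ℝ, v = fun _ => c := by
  have h1Ψ₁ : (1 + Ψ₁).PosDef := PosDef.one.add hΨ₁
  set M := (1 + Ψ₁)⁻¹
  have hM : M.PosDef := h1Ψ₁.inv
  have hΨ₁symm : Ψ₁.IsSymm := isHermitian_iff_isSymm.mp hΨ₁.isHermitian
  have hΨ₂M : Ψ₂ = 1 - M := hΨ₂.trans <| inv_add_one_inv_eq_one_sub_inv_one_add
    hΨ₁.det_pos.ne'.isUnit h1Ψ₁.det_pos.ne'.isUnit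
  have hΨ₂symm : Ψ₂.IsSymm := hΨ₂M ▸ isSymm_one.sub (isHermitian_iff_isSymm.mp hM.isHermitian)
  have hquad (v : Fin L → ℝ) :
      2 * (v ⬝ᵥ F *ᵥ v) = (⁅diagonal v, Ψ₁⁆ᴴ * M * ⁅diagonal v, Ψ₁⁆ * M).trace := by
    rw [hF, two_mul_dotProduct_diagonal_diag_mul_sub_hadamard_mulVec hΨ₁symm hΨ₂symm, hΨ₂M,
      lie_one_sub_nonsing_inv _ h1Ψ₁.det_pos.ne'.isUnit, lie_one_add,
      conjTranspose_eq_transpose_of_trivial]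
    simp only [M, mul_assoc]
  refine ⟨.of_dotProduct_mulVec_nonneg ?_ fun v => ?_, fun v => ⟨fun hv => ?_, ?_⟩⟩
  · exact hF ▸ isHermitian_iff_isSymm.mpr
      (isSymm_diagonal_diag_mul_sub_hadamard hΨ₁symm hΨ₂symm)
  · rw [star_trivial]
    linarith [hquad v, hM.trace_conjTranspose_mul_mul_mul_nonneg ⁅diagonal v, Ψ₁⁆]
  · refine hIrr.exists_eq_const (hM.trace_conjTranspose_mul_mul_mul_eq_zero_iff.mp ?_)
    rw [← hquad, hv, dotProduct_zero, mul_zero]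
  · rintro ⟨c, rfl⟩
    exact hF ▸ diagonal_diag_mul_sub_hadamard_mulVec_const hΨ₂symm c

/-- for a real symmetric positive definite irreducible `Ψ₁` and
`Ψ₂ := (Ψ₁⁻¹ + I)⁻¹`, the kernel of the positive semidefinite matrix
`F := Diag(diag(Ψ₁Ψ₂)) − Ψ₁⊙Ψ₂` is exactly the span of the all-ones vector. -/
theorem stmt11 {L : ℕ} (hL : 0 < L)
    (Ψ₁ : Matrix (Fin L) (Fin L) ℝ) (hΨ₁ : Ψ₁.PosDef) (hIrr : MatrixIrreducible Ψ₁)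
    (Ψ₂ : Matrix (Fin L) (Fin L) ℝ) (hΨ₂ : Ψ₂ = (Ψ₁⁻¹ + 1)⁻¹)
    (F : Matrix (Fin L) (Fin L) ℝ)
    (hF : F = Matrix.diagonal (Matrix.diag (Ψ₁ * Ψ₂)) - Matrix.hadamard Ψ₁ Ψ₂) :
    F.PosSemidef ∧
      ∀ v : Fin L → ℝ, F *ᵥ v = 0 ↔ ∃ c : ℝ, v = fun _ => c :=
  stmt11_general Ψ₁ hΨ₁ hIrr Ψ₂ hΨ₂ F hF
end
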